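/- Let Γ be a bipartite metrically homogeneous graph of generic type with diameter δ ≥ 3, and let ε ∈ {0,1} satisfy δ ≡ ε (mod 2) and C₀ = 2(δ+ε)+2. Then Γ^{τ_ε} is a metrically homogeneous graph. -/

import Mathlib

open SimpleGraph

section Defs

variable {V : Type*}

/-- A graph is *metrically homogeneous* if it is connected and every
distance-preserving map defined on a finite set of vertices extends to a
distance-preserving bijection of the whole vertex set (with respect to the
path metric). -/
def IsMetricallyHomogeneous (G : SimpleGraph V) : Prop :=
  G.Connected ∧
  ∀ (s : Finset V) (f : V → V),
    (∀ x ∈ s, ∀ y ∈ s, G.dist (f x) (f y) = G.dist x y) →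
    ∃ g : V ≃ V, (∀ x y : V, G.dist (g x) (g y) = G.dist x y) ∧ ∀ x ∈ s, g x = f x

/-- `δ` is the diameter of `G` (with respect to the path metric). -/
def HasDiameter (G : SimpleGraph V) (δ : ℕ) : Prop :=
  (∀ x y : V, G.dist x y ≤ δ) ∧ ∃ x y : V, G.dist x y = δ

/-- The set of (nonzero) distances realized in `G`. -/
def DistSet (G : SimpleGraph V) : Set ℕ :=
  {n : ℕ | 0 < n ∧ ∃ x y : V, G.dist x y = n}

/-- `G` is of *generic type*: any two vertices at distance `2` have infinitely
many common neighbors forming an independent set, and the set of neighbors of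
any fixed vertex (with the induced metric) carries no non-trivial equivalence
relation invariant under all of its self-isometries. -/
def GenericType (G : SimpleGraph V) : Prop :=
  (∀ x y : V, G.dist x y = 2 →
    {z : V | G.Adj x z ∧ G.Adj y z}.Infinite ∧
    ∀ z w : V, (G.Adj x z ∧ G.Adj y z) → (G.Adj x w ∧ G.Adj y w) → ¬ G.Adj z w) ∧
  ∀ v : V, ∀ r : G.neighborSet v → G.neighborSet v → Prop,
    Equivalence r →
    (∀ g : G.neighborSet v ≃ G.neighborSet v,
      (∀ x y : G.neighborSet v, G.dist (g x : V) (g y : V) = G.dist (x : V) (y : V)) →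
      ∀ x y : G.neighborSet v, r x y → r (g x) (g y)) →
    (∀ x y, r x y) ∨ (∀ x y, r x y → x = y)

/-- A triangle of type `(a,b,c)` is realized in `G`. -/
def RealizesTriangle (G : SimpleGraph V) (a b c : ℕ) : Prop :=
  ∃ x y z : V, G.dist x y = a ∧ G.dist y z = b ∧ G.dist x z = c

/-- `G` contains a triangle (three distinct vertices) of perimeter `p`. -/
def RealizesPerimeter (G : SimpleGraph V) (p : ℕ) : Prop :=
  ∃ x y z : V, x ≠ y ∧ y ≠ z ∧ x ≠ z ∧ G.dist x y + G.dist y z + G.dist x z = p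

/-- `k` is the parameter `K₁` of `G`: the least `m` such that a triangle of
type `(m,m,1)` is realized in `G`. -/
def IsK1 (G : SimpleGraph V) (k : ℕ) : Prop :=
  IsLeast {m : ℕ | RealizesTriangle G m m 1} k

/-- `k` is the parameter `K₂` of `G`: the greatest `m` such that a triangle of
type `(m,m,1)` is realized in `G`. -/
def IsK2 (G : SimpleGraph V) (k : ℕ) : Prop :=
  IsGreatest {m : ℕ | RealizesTriangle G m m 1} k

/-- `c` is the parameter `C₀` of `G` (relative to the diameter `δ`): the least
even number greater than `2δ` such that no triangle of perimeter `c` occurs. -/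
def IsC0 (G : SimpleGraph V) (δ c : ℕ) : Prop :=
  IsLeast {c' : ℕ | Even c' ∧ 2 * δ < c' ∧ ¬ RealizesPerimeter G c'} c

/-- `c` is the parameter `C₁` of `G` (relative to the diameter `δ`): the least
odd number greater than `2δ` such that no triangle of perimeter `c` occurs. -/
def IsC1 (G : SimpleGraph V) (δ c : ℕ) : Prop :=
  IsLeast {c' : ℕ | Odd c' ∧ 2 * δ < c' ∧ ¬ RealizesPerimeter G c'} c

/-- `G` (of diameter `δ`) is antipodal: every vertex has a unique vertex at
distance `δ` from it. -/
def IsAntipodal (G : SimpleGraph V) (δ : ℕ) : Prop :=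
  ∀ v : V, ∃! w : V, G.dist v w = δ

/-- `G` is bipartite. -/
def IsBipartiteGraph (G : SimpleGraph V) : Prop :=
  ∃ f : V → Bool, ∀ x y : V, G.Adj x y → f x ≠ f y

/-- `G` is complete multipartite: there is an equivalence relation such that
two vertices are adjacent exactly when they are inequivalent. -/
def IsCompleteMultipartiteGraph (G : SimpleGraph V) : Prop :=
  ∃ r : V → V → Prop, Equivalence r ∧ ∀ x y : V, G.Adj x y ↔ ¬ r x y

/-- `G` is an `n`-cycle. -/
def IsNCycle (G : SimpleGraph V) (n : ℕ) : Prop :=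
  ∃ e : V ≃ ZMod n, ∀ x y : V, G.Adj x y ↔ (e x - e y = 1 ∨ e y - e x = 1)

/-- The permutation `ρ` of `{1,…,δ}`. -/
def rhoFun (δ i : ℕ) : ℕ := if 2 * i ≤ δ then 2 * i else 2 * (δ - i) + 1

/-- The permutation `ρ⁻¹` of `{1,…,δ}`. -/
def rhoInvFun (δ i : ℕ) : ℕ := if Even i then i / 2 else δ - (i - 1) / 2

/-- The involution `τ_ε` of `{1,…,δ}`, for `ε = 0` or `1`. -/
def tauFun (δ ε i : ℕ) : ℕ := if Odd (min i (δ + ε - i)) then δ + ε - i else i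

/-- The `n`-cycle graph on `ZMod n`. -/
def zmodCycleGraph (n : ℕ) : SimpleGraph (ZMod n) where
  Adj x y := x ≠ y ∧ (x - y = 1 ∨ y - x = 1)
  symm := ⟨fun x y h => ⟨h.1.symm, h.2.symm⟩⟩
  loopless := ⟨fun x h => h.1 rfl⟩

end Defs

/-! The twisted metric `τ_ε ∘ d` is the path metric of the graph joining the vertices at distance
`δ + ε - 1 = τ_ε 1`. As `Γ` is bipartite and `C₀ = 2(δ + ε) + 2`, every triangle has even perimeter
at most `2(δ + ε)`; along an edge of the new graph this lets `τ_ε ∘ d` change by at most one, so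
`τ_ε ∘ d` is a lower bound for the new distance. Conversely, walks of length `τ_ε ∘ d` are assembled
from geodesics of `Γ` and triangles of type `(2, δ + ε - 1, δ + ε - 1)`, which are obtained by
pushing length from one side to another in a triangle of maximal perimeter. Since `τ_ε` is injective,
isometries of the new graph are those of `Γ`, and metric homogeneity carries over. -/

namespace SimpleGraph

variable {V : Type*} {G : SimpleGraph V}

lemma Connected.exists_dist_eq_dist_eq (hc : G.Connected) {x y : V} {k l : ℕ}
    (h : k + l = G.dist x y) : ∃ w, G.dist x w = k ∧ G.dist w y = l := by
  obtain ⟨p, hp⟩ := hc.exists_walk_length_eq_dist x y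
  have hxw := dist_le (p.take k)
  have hwy := dist_le (p.drop k)
  have htri : G.dist x y ≤ G.dist x (p.getVert k) + G.dist (p.getVert k) y := hc.dist_triangle
  rw [Walk.take_length] at hxw
  rw [Walk.drop_length] at hwy
  exact ⟨p.getVert k, by omega, by omega⟩

lemma even_dist_iff_of_coloring (hc : G.Connected) (c : G.Coloring Bool) (x y : V) :
    Even (G.dist x y) ↔ (c x ↔ c y) := by
  obtain ⟨p, hp⟩ := hc.exists_walk_length_eq_dist x y
  rw [← hp, c.even_length_iff_congr]

def distanceGraph (G : SimpleGraph V) (k : ℕ) : SimpleGraph V where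
  Adj x y := x ≠ y ∧ G.dist x y = k
  symm := ⟨fun _ _ h => ⟨h.1.symm, dist_comm.trans h.2⟩⟩
  loopless := ⟨fun _ h => h.1 rfl⟩

lemma distanceGraph_adj_of_dist_eq {k : ℕ} (hk : k ≠ 0) {x y : V} (h : G.dist x y = k) :
    (G.distanceGraph k).Adj x y :=
  ⟨by rintro rfl; exact hk (h ▸ dist_self), h⟩

end SimpleGraph

section

variable {V : Type*} {G : SimpleGraph V}

lemma IsBipartiteGraph.even_perimeter (hbip : IsBipartiteGraph G) (hc : G.Connected) (x y z : V) :
    Even (G.dist x y + G.dist y z + G.dist x z) := by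
  obtain ⟨f, hf⟩ := hbip
  let c : G.Coloring Bool := Coloring.mk f fun h => hf _ _ h
  simp only [Nat.even_add, even_dist_iff_of_coloring hc c]
  tauto

section Perimeter

variable {δ : ℕ}

/-- Walking from `y` towards `z` changes `G.dist x ·` by `±1` at each step; it cannot increase all
the way, since the perimeter at the end is `2 * G.dist x z ≤ 2δ`. -/
lemma exists_perimeter_add_two_eq (hc : G.Connected) (hbip : IsBipartiteGraph G)
    (hδ : ∀ x y : V, G.dist x y ≤ δ) {x y z : V}
    (h : 2 * δ + 4 ≤ G.dist x y + G.dist y z + G.dist x z) :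
    ∃ x' y' z' : V, G.dist x' y' + G.dist y' z' + G.dist x' z' + 2 =
      G.dist x y + G.dist y z + G.dist x z := by
  induction hn : G.dist y z using Nat.strong_induction_on generalizing y with
  | _ n ih =>
    have := hδ x y
    have := hδ x z
    obtain ⟨w, hyw, hwz⟩ := hc.exists_dist_eq_dist_eq (x := y) (y := z) (k := 1) (l := n - 1)
      (by omega)
    have := hbip.even_perimeter hc x y w
    have : G.dist x w ≤ G.dist x y + G.dist y w := hc.dist_triangle
    have : G.dist x y ≤ G.dist x w + G.dist w y := hc.dist_triangle
    have : G.dist w y = G.dist y w := dist_comm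
    rw [Nat.even_iff] at *
    obtain hdown | hup : G.dist x w + 1 = G.dist x y ∨ G.dist x w = G.dist x y + 1 := by omega
    · exact ⟨x, w, z, by omega⟩
    · obtain ⟨x', y', z', h'⟩ := ih (n - 1) (by omega) (y := w) (by omega) hwz
      exact ⟨x', y', z', by omega⟩

lemma realizesPerimeter_of_lt (hδ : ∀ x y : V, G.dist x y ≤ δ) {x y z : V}
    (h : 2 * δ < G.dist x y + G.dist y z + G.dist x z) :
    RealizesPerimeter G (G.dist x y + G.dist y z + G.dist x z) := by
  have := hδ x y
  have := hδ y z
  have := hδ x z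
  refine ⟨x, y, z, ?_, ?_, ?_, rfl⟩ <;> rintro rfl <;> simp only [dist_self, dist_comm] at h <;>
    omega

lemma perimeter_add_two_le_of_not_realizesPerimeter (hc : G.Connected)
    (hbip : IsBipartiteGraph G) (hδ : ∀ x y : V, G.dist x y ≤ δ) {C : ℕ} (hCeven : Even C)
    (hC : 2 * δ < C) (hnot : ¬ RealizesPerimeter G C) (x y z : V) :
    G.dist x y + G.dist y z + G.dist x z + 2 ≤ C := by
  rw [Nat.even_iff] at hCeven
  have hpar := Nat.even_iff.mp (hbip.even_perimeter hc x y z)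
  by_contra! hlt
  obtain ⟨n, hn⟩ : ∃ n, G.dist x y + G.dist y z + G.dist x z = C + 2 * n :=
    ⟨(G.dist x y + G.dist y z + G.dist x z - C) / 2, by omega⟩
  clear hlt hpar
  induction n generalizing x y z with
  | zero =>
    have := realizesPerimeter_of_lt hδ (x := x) (y := y) (z := z) (by omega)
    exact hnot (by simpa [hn] using this)
  | succ n ih =>
    obtain ⟨x', y', z', h'⟩ := exists_perimeter_add_two_eq hc hbip hδ (x := x) (y := y) (z := z)
      (by omega)
    exact ih x' y' z' (by omega)

end Perimeter

lemma RealizesTriangle.swap_ab {a b c : ℕ} (h : RealizesTriangle G a b c) :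
    RealizesTriangle G b a c := by
  obtain ⟨x, y, z, hxy, hyz, hxz⟩ := h
  exact ⟨z, y, x, dist_comm.trans hyz, dist_comm.trans hxy, dist_comm.trans hxz⟩

lemma RealizesTriangle.swap_ac {a b c : ℕ} (h : RealizesTriangle G a b c) :
    RealizesTriangle G c b a := by
  obtain ⟨x, y, z, hxy, hyz, hxz⟩ := h
  exact ⟨x, z, y, hxz, dist_comm.trans hyz, hxy⟩

lemma HasDiameter.realizesTriangle_add (hc : G.Connected) {δ : ℕ} (hdiam : HasDiameter G δ)
    {m k : ℕ} (h : m + k ≤ δ) : RealizesTriangle G m k (m + k) := by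
  obtain ⟨x, y, hxy⟩ := hdiam.2
  obtain ⟨z, hxz, -⟩ := hc.exists_dist_eq_dist_eq (x := x) (y := y) (k := m + k) (l := δ - (m + k))
    (by omega)
  obtain ⟨w, hxw, hwz⟩ := hc.exists_dist_eq_dist_eq (x := x) (y := z) (k := m) (l := k) (by omega)
  exact ⟨x, w, z, hxw, hwz, hxz⟩

lemma RealizesTriangle.le_add (hc : G.Connected) {a b c : ℕ} (h : RealizesTriangle G a b c) :
    a ≤ b + c := by
  obtain ⟨x, y, z, rfl, rfl, rfl⟩ := h
  rw [add_comm, dist_comm (u := y)]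
  exact hc.dist_triangle

namespace IsMetricallyHomogeneous

lemma exists_dist_eq_of_realizesTriangle (hG : IsMetricallyHomogeneous G) {a b c : ℕ}
    (ht : RealizesTriangle G a b c) {x y : V} (hxy : G.dist x y = a) :
    ∃ z, G.dist y z = b ∧ G.dist x z = c := by
  classical
  obtain ⟨x₀, y₀, z₀, h₀, hb, hc⟩ := ht
  have hxy_iff : x = y ↔ x₀ = y₀ := by
    rw [← hG.1.dist_eq_zero_iff, ← hG.1.dist_eq_zero_iff, hxy, h₀]
  obtain ⟨g, hg, hgs⟩ := hG.2 {x₀, y₀} (fun v => if v = x₀ then x else y) (by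
    simp only [Finset.mem_insert, Finset.mem_singleton]
    rintro u (rfl | rfl) v (rfl | rfl) <;> split_ifs <;> simp_all [dist_comm])
  have hgx : g x₀ = x := by simpa using hgs x₀ (by simp)
  have hgy : g y₀ = y := by
    have := hgs y₀ (by simp)
    split_ifs at this with h
    · rw [this, hxy_iff, h]
    · exact this
  exact ⟨g z₀, by rw [← hgy, hg, hb], by rw [← hgx, hg, hc]⟩

lemma exists_dist_eq_add (hG : IsMetricallyHomogeneous G) {δ : ℕ} (hdiam : HasDiameter G δ)
    {x y : V} {k : ℕ} (h : G.dist x y + k ≤ δ) :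
    ∃ w : V, G.dist y w = k ∧ G.dist x w = G.dist x y + k :=
  hG.exists_dist_eq_of_realizesTriangle (hdiam.realizesTriangle_add hG.1 h) rfl

/-- Lengthening the side `yz` of a triangle of maximal perimeter by one, along an edge at `z`,
forces the side `xz` to shrink by one. -/
lemma realizesTriangle_of_maximal (hG : IsMetricallyHomogeneous G) {δ : ℕ}
    (hdiam : HasDiameter G δ) {a b c : ℕ} (ht : RealizesTriangle G a b c)
    (hmax : ∀ x y z : V, G.dist x y + G.dist y z + G.dist x z ≤ a + b + c)
    {b' c' : ℕ} (hb : b ≤ b') (hb' : b' ≤ δ) (hsum : b' + c' = b + c) :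
    RealizesTriangle G a b' c' := by
  obtain ⟨k, rfl⟩ := Nat.exists_eq_add_of_le hb
  induction k generalizing c' with
  | zero => simpa [show c' = c by omega] using ht
  | succ k ih =>
    obtain ⟨x, y, z, hxy, hyz, hxz⟩ := ih (c' := c' + 1) (by omega) (by omega) (by omega)
    obtain ⟨w, hzw, hyw⟩ := hG.exists_dist_eq_add hdiam (x := y) (y := z) (k := 1) (by omega)
    have : G.dist x z ≤ G.dist x w + G.dist w z := hG.1.dist_triangle
    have : G.dist w z = G.dist z w := dist_comm
    have := hmax x y w
    exact ⟨x, y, w, hxy, by omega, by omega⟩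

lemma realizesTriangle_two_pred_pred (hG : IsMetricallyHomogeneous G) {δ : ℕ}
    (hdiam : HasDiameter G δ) (hδ : 2 ≤ δ)
    (hper : ∀ x y z : V, G.dist x y + G.dist y z + G.dist x z ≤ 2 * δ) :
    RealizesTriangle G 2 (δ - 1) (δ - 1) := by
  obtain ⟨x, y, hxy⟩ := hdiam.2
  have hmax : ∀ x y z : V, G.dist x y + G.dist y z + G.dist x z ≤ δ + 0 + δ :=
    fun x y z => (hper x y z).trans_eq (by ring)
  have h₁ : RealizesTriangle G δ 1 (δ - 1) :=
    hG.realizesTriangle_of_maximal hdiam ⟨x, y, y, hxy, dist_self, hxy⟩ hmax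
      (by omega) (by omega) (by omega)
  have h₂ : RealizesTriangle G (δ - 1) 2 (δ - 1) :=
    hG.realizesTriangle_of_maximal hdiam h₁.swap_ac
      (fun x y z => (hmax x y z).trans_eq (by omega)) (by omega) (by omega) (by omega)
  exact h₂.swap_ab

lemma realizesTriangle_two_of_realizesPerimeter (hG : IsMetricallyHomogeneous G) {δ : ℕ}
    (hdiam : HasDiameter G δ)
    (hper : ∀ x y z : V, G.dist x y + G.dist y z + G.dist x z ≤ 2 * δ + 2)
    (h : RealizesPerimeter G (2 * δ + 2)) :
    RealizesTriangle G 2 δ δ := by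
  obtain ⟨x, y, z, -, -, -, hsum⟩ := h
  have := hdiam.1 x y
  have := hdiam.1 y z
  have := hdiam.1 x z
  have h₁ : RealizesTriangle G (G.dist x y) δ (δ + 2 - G.dist x y) :=
    hG.realizesTriangle_of_maximal hdiam ⟨x, y, z, rfl, rfl, rfl⟩
      (fun a b c => (hper a b c).trans_eq hsum.symm) (by omega) le_rfl (by omega)
  have h₂ : RealizesTriangle G δ δ 2 :=
    hG.realizesTriangle_of_maximal hdiam h₁.swap_ab
      (fun a b c => (hper a b c).trans_eq (by omega)) (by omega) le_rfl (by omega)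
  exact h₂.swap_ac

lemma of_dist_eq {H : SimpleGraph V} (hG : IsMetricallyHomogeneous G)
    (hH : H.Connected) {δ : ℕ} (hδ : ∀ x y : V, G.dist x y ≤ δ) {σ : ℕ → ℕ}
    (hσ : Set.InjOn σ (Set.Iic δ)) (hdist : ∀ x y : V, H.dist x y = σ (G.dist x y)) :
    IsMetricallyHomogeneous H := by
  refine ⟨hH, fun s f hf => ?_⟩
  obtain ⟨g, hg, hgs⟩ := hG.2 s f fun x hx y hy =>
    hσ (hδ _ _) (hδ _ _) (by rw [← hdist, ← hdist, hf x hx y hy])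
  exact ⟨g, fun x y => by rw [hdist, hdist, hg], hgs⟩

end IsMetricallyHomogeneous

section Tau

variable {δ ε : ℕ}

lemma tauFun_of_even (hD : Even (δ + ε)) {m : ℕ} (hm : m ≤ δ + ε) (h : Even m) :
    tauFun δ ε m = m := by
  rw [Nat.even_iff] at hD h
  simp only [tauFun, Nat.odd_iff]
  split_ifs <;> omega

lemma tauFun_of_odd (hD : Even (δ + ε)) {m : ℕ} (hm : m ≤ δ + ε) (h : Odd m) :
    tauFun δ ε m = δ + ε - m := by
  rw [Nat.even_iff] at hD
  rw [Nat.odd_iff] at h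
  simp only [tauFun, Nat.odd_iff]
  split_ifs <;> omega

lemma tauFun_injOn (hD : Even (δ + ε)) : Set.InjOn (tauFun δ ε) (Set.Iic (δ + ε)) := by
  intro m hm n hn h
  rw [Set.mem_Iic] at hm hn
  rw [Nat.even_iff] at hD
  simp only [tauFun, Nat.odd_iff] at h
  split_ifs at h <;> omega

/-- `p`, `q` and `δ + ε - 1` are the sides of a triangle formed by an edge of
`G.distanceGraph (δ + ε - 1)` and a third vertex. -/
lemma tauFun_le_tauFun_add_one (hD : Even (δ + ε)) {p q : ℕ} (hp : p ≤ δ + ε) (hq : q ≤ δ + ε)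
    (hpar : Even (δ + ε - 1 + q + p)) (htri : δ + ε - 1 ≤ p + q)
    (hper : δ + ε - 1 + q + p ≤ 2 * (δ + ε)) :
    tauFun δ ε p ≤ tauFun δ ε q + 1 := by
  rw [Nat.even_iff] at hD hpar
  simp only [tauFun, Nat.odd_iff]
  split_ifs <;> omega

end Tau

lemma tauFun_dist_le_length_distanceGraph {δ ε : ℕ} (hc : G.Connected)
    (hbip : IsBipartiteGraph G) (hδ : ∀ x y : V, G.dist x y ≤ δ) (hD : Even (δ + ε))
    (hper : ∀ x y z : V, G.dist x y + G.dist y z + G.dist x z ≤ 2 * (δ + ε)) {x y : V}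
    (p : (G.distanceGraph (δ + ε - 1)).Walk x y) :
    tauFun δ ε (G.dist x y) ≤ p.length := by
  induction p with
  | nil => simp [tauFun]
  | @cons x z y hxz p ih =>
    have : G.dist x z ≤ G.dist x y + G.dist y z := hc.dist_triangle
    have := hxz.2
    have : G.dist y z = G.dist z y := dist_comm
    have := hδ x y
    have := hδ z y
    have := tauFun_le_tauFun_add_one hD (p := G.dist x y) (q := G.dist z y) (by omega) (by omega)
      (hxz.2 ▸ hbip.even_perimeter hc x z y) (by omega) (hxz.2 ▸ hper x z y)
    rw [Walk.length_cons]
    omega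

namespace IsMetricallyHomogeneous

variable {δ ε : ℕ}

lemma exists_distanceGraph_walk_of_dist_eq_two (hG : IsMetricallyHomogeneous G)
    (htri : RealizesTriangle G 2 (δ + ε - 1) (δ + ε - 1)) {x y : V} (h : G.dist x y = 2) :
    ∃ p : (G.distanceGraph (δ + ε - 1)).Walk x y, p.length = 2 := by
  have hk : δ + ε - 1 ≠ 0 := by have := htri.le_add hG.1; omega
  obtain ⟨w, hyw, hxw⟩ := hG.exists_dist_eq_of_realizesTriangle htri h
  exact ⟨.cons (distanceGraph_adj_of_dist_eq hk hxw)
    (.cons (distanceGraph_adj_of_dist_eq hk (dist_comm.trans hyw)) .nil), rfl⟩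

/-- An even distance `m` is covered by `m / 2` paths of length two; an odd distance `m` is
lengthened to `m + 2 ≤ δ` by a detour through a vertex at distance `2` from the end, which lowers
`δ + ε - m` by two. -/
lemma exists_distanceGraph_walk_length_le (hG : IsMetricallyHomogeneous G)
    (hdiam : HasDiameter G δ) (hε : ε ≤ 1) (hD : Even (δ + ε))
    (htri : RealizesTriangle G 2 (δ + ε - 1) (δ + ε - 1)) (x y : V) :
    ∃ p : (G.distanceGraph (δ + ε - 1)).Walk x y, p.length ≤ tauFun δ ε (G.dist x y) := by
  have hk : δ + ε - 1 ≠ 0 := by have := htri.le_add hG.1; omega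
  induction hn : tauFun δ ε (G.dist x y) using Nat.strong_induction_on generalizing x y with
  | _ n ih =>
    have hxy := hdiam.1 x y
    rcases Nat.even_or_odd (G.dist x y) with heven | hodd
    · rw [tauFun_of_even hD (by omega) heven] at hn
      by_cases h0 : G.dist x y = 0
      · rw [hG.1.dist_eq_zero_iff.mp h0]
        exact ⟨.nil, Nat.zero_le _⟩
      have heven' := Nat.even_iff.mp heven
      obtain ⟨w, hxw, hwy⟩ :=
        hG.1.exists_dist_eq_dist_eq (x := x) (y := y) (k := 2) (l := G.dist x y - 2) (by omega)
      obtain ⟨p, hp⟩ := hG.exists_distanceGraph_walk_of_dist_eq_two htri hxw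
      have hτ : tauFun δ ε (G.dist w y) = G.dist x y - 2 :=
        hwy ▸ tauFun_of_even hD (by omega) (by rw [Nat.even_iff]; omega)
      obtain ⟨q, hq⟩ := ih _ (by omega) w y hτ
      exact ⟨p.append q, by rw [Walk.length_append]; omega⟩
    · rw [tauFun_of_odd hD (by omega) hodd] at hn
      by_cases hadj : G.dist x y = δ + ε - 1
      · exact ⟨.cons (distanceGraph_adj_of_dist_eq hk hadj) .nil, by simp; omega⟩
      have hD' := Nat.even_iff.mp hD
      have hodd' := Nat.odd_iff.mp hodd
      obtain ⟨w, hyw, hxw⟩ := hG.exists_dist_eq_add hdiam (x := x) (y := y) (k := 2) (by omega)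
      have hτ : tauFun δ ε (G.dist x w) = n - 2 := by
        rw [hxw, tauFun_of_odd hD (by omega) (by rw [Nat.odd_iff]; omega)]
        omega
      obtain ⟨p, hp⟩ := ih _ (by omega) x w hτ
      obtain ⟨q, hq⟩ := hG.exists_distanceGraph_walk_of_dist_eq_two htri (dist_comm.trans hyw)
      exact ⟨p.append q, by rw [Walk.length_append]; omega⟩

lemma dist_distanceGraph (hG : IsMetricallyHomogeneous G) (hbip : IsBipartiteGraph G)
    (hdiam : HasDiameter G δ) (hε : ε ≤ 1) (hD : Even (δ + ε))
    (hper : ∀ x y z : V, G.dist x y + G.dist y z + G.dist x z ≤ 2 * (δ + ε))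
    (htri : RealizesTriangle G 2 (δ + ε - 1) (δ + ε - 1)) (x y : V) :
    (G.distanceGraph (δ + ε - 1)).dist x y = tauFun δ ε (G.dist x y) := by
  obtain ⟨p, hp⟩ := hG.exists_distanceGraph_walk_length_le hdiam hε hD htri x y
  obtain ⟨q, hq⟩ := p.reachable.exists_walk_length_eq_dist
  have := tauFun_dist_le_length_distanceGraph hG.1 hbip hdiam.1 hD hper q
  have := dist_le p
  omega

lemma connected_distanceGraph (hG : IsMetricallyHomogeneous G) (hdiam : HasDiameter G δ)
    (hε : ε ≤ 1) (hD : Even (δ + ε)) (htri : RealizesTriangle G 2 (δ + ε - 1) (δ + ε - 1)) :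
    (G.distanceGraph (δ + ε - 1)).Connected :=
  have := hG.1.nonempty
  ⟨fun x y => (hG.exists_distanceGraph_walk_length_le hdiam hε hD htri x y).choose.reachable⟩

end IsMetricallyHomogeneous

end

theorem sufficiency_tau_bipartite_general {V : Type*} (G : SimpleGraph V) (δ ε : ℕ)
    (hδ : 3 ≤ δ) (hpar : δ % 2 = ε)
    (hG : IsMetricallyHomogeneous G)
    (hbip : IsBipartiteGraph G)
    (hdiam : HasDiameter G δ)
    (hC0 : IsC0 G δ (2 * (δ + ε) + 2)) :
    ∃ H : SimpleGraph V, IsMetricallyHomogeneous H ∧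
      ∀ x y : V, x ≠ y → H.dist x y = tauFun δ ε (G.dist x y) := by
  have hε : ε ≤ 1 := by omega
  have hD : Even (δ + ε) := Nat.even_iff.mpr (by omega)
  have hper (x y z : V) : G.dist x y + G.dist y z + G.dist x z ≤ 2 * (δ + ε) := by
    have := perimeter_add_two_le_of_not_realizesPerimeter hG.1 hbip hdiam.1
      ⟨δ + ε + 1, by ring⟩ (by omega) hC0.1.2.2 x y z
    omega
  have htri : RealizesTriangle G 2 (δ + ε - 1) (δ + ε - 1) := by
    obtain rfl | rfl : ε = 0 ∨ ε = 1 := by omega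
    · exact hG.realizesTriangle_two_pred_pred hdiam (by omega) hper
    · have hreal : RealizesPerimeter G (2 * δ + 2) := by
        by_contra h
        have := hC0.2 ⟨⟨δ + 1, by ring⟩, by omega, h⟩
        omega
      simpa using hG.realizesTriangle_two_of_realizesPerimeter hdiam
        (fun x y z => (hper x y z).trans_eq (by ring)) hreal
  have hdist := hG.dist_distanceGraph hbip hdiam hε hD hper htri
  refine ⟨G.distanceGraph (δ + ε - 1), ?_, fun x y _ => hdist x y⟩
  exact hG.of_dist_eq (hG.connected_distanceGraph hdiam hε hD htri) hdiam.1
    ((tauFun_injOn hD).mono (Set.Iic_subset_Iic.mpr (by omega))) hdist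

/-- a bipartite metrically homogeneous graph of generic type
with `δ ≡ ε (mod 2)` and `C₀ = 2(δ+ε)+2` is twistable by `τ_ε`. -/
theorem sufficiency_tau_bipartite {V : Type*} (G : SimpleGraph V) (δ ε : ℕ)
    (hδ : 3 ≤ δ) (hε : ε ≤ 1) (hpar : δ % 2 = ε)
    (hG : IsMetricallyHomogeneous G) (hgen : GenericType G)
    (hbip : IsBipartiteGraph G)
    (hdiam : HasDiameter G δ)
    (hC0 : IsC0 G δ (2 * (δ + ε) + 2)) :
    ∃ H : SimpleGraph V, IsMetricallyHomogeneous H ∧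
      ∀ x y : V, x ≠ y → H.dist x y = tauFun δ ε (G.dist x y) :=
  sufficiency_tau_bipartite_general G δ ε hδ hpar hG hbip hdiam hC0
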